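/- For every complex number s with Re(s) > 1, L(s, λ_5) = ζ(5s) / ( ζ(s) ζ(2s) ). -/

import Mathlib

/-!
`λ₅` is multiplicative with `λ₅(p^e) = ((e+1)/5)`, and the character values `1, -1, -1, 1, 0`
of `(·/5)` on `1, …, 5` are the coefficients of `(1 - x)(1 - x²) = 1 - x - x² + x³`. Hence, locally,
`∑ₑ λ₅(p^e) xᵉ = (1 - x)(1 - x²)/(1 - x⁵)`, i.e. `λ₅ * 1_□ * 1 = 1_{5th powers}` as Dirichlet
convolutions, where `1_□` and `1_{5th powers}` have L-series `ζ(2s)` and `ζ(5s)`.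
-/

instance : Fact (Nat.Prime 5) := ⟨by norm_num⟩

/-- `λ_5(n) = (τ(n)/5)` as a complex number. -/
noncomputable def lam5 (n : ℕ) : ℂ :=
  (legendreSym 5 (n.divisors.card : ℤ) : ℂ)

open Finset LSeries
open scoped ArithmeticFunction.zeta

namespace ArithmeticFunction

variable {R : Type*}

theorem mul_apply_prime_pow [Semiring R] (f g : ArithmeticFunction R) {p : ℕ} (hp : p.Prime)
    (e : ℕ) : (f * g) (p ^ e) = ∑ i ∈ range (e + 1), f (p ^ i) * g (p ^ (e - i)) := by
  rw [mul_apply, Nat.sum_divisorsAntidiagonal (f · * g ·), Nat.sum_divisors_prime_pow hp]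
  refine sum_congr rfl fun i hi => ?_
  rw [Nat.pow_div (Nat.le_of_lt_succ (mem_range.mp hi)) hp.pos]

open Classical in
noncomputable def powIndicator [Zero R] [One R] (m : ℕ) : ArithmeticFunction R :=
  ⟨fun n => if n ≠ 0 ∧ ∃ k, k ^ m = n then 1 else 0, by simp⟩

open Classical in
theorem powIndicator_apply [Zero R] [One R] (m n : ℕ) :
    powIndicator (R := R) m n = if n ≠ 0 ∧ ∃ k, k ^ m = n then 1 else 0 :=
  rfl

theorem powIndicator_apply_pow [Zero R] [One R] {m k : ℕ} (hk : k ≠ 0) :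
    powIndicator (R := R) m (k ^ m) = 1 := by
  rw [powIndicator_apply, if_pos ⟨pow_ne_zero m hk, k, rfl⟩]

theorem powIndicator_apply_prime_pow [Zero R] [One R] {m p : ℕ} (hm : m ≠ 0) (hp : p.Prime)
    (e : ℕ) : powIndicator (R := R) m (p ^ e) = if m ∣ e then 1 else 0 := by
  rcases em (m ∣ e) with ⟨c, rfl⟩ | h
  · rw [if_pos ⟨c, rfl⟩, pow_mul', powIndicator_apply_pow (pow_ne_zero c hp.ne_zero)]
  · rw [powIndicator_apply, if_neg h, if_neg]
    rintro ⟨-, k, hk⟩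
    obtain ⟨t, -, rfl⟩ := (Nat.dvd_prime_pow hp).mp (hk ▸ dvd_pow_self k hm)
    rw [← pow_mul] at hk
    exact h ⟨t, (Nat.pow_right_injective hp.two_le hk).symm.trans (mul_comm t m)⟩

theorem isMultiplicative_powIndicator [MonoidWithZero R] (m : ℕ) :
    (powIndicator (R := R) m).IsMultiplicative := by
  refine ⟨by simpa using powIndicator_apply_pow (R := R) (m := m) one_ne_zero,
    fun {a b} hab => ?_⟩
  rcases eq_or_ne a 0 with rfl | ha
  · simp [powIndicator_apply]
  rcases eq_or_ne b 0 with rfl | hb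
  · simp [powIndicator_apply]
  have pow_iff : (∃ k, k ^ m = a * b) ↔ (∃ k, k ^ m = a) ∧ ∃ k, k ^ m = b := by
    constructor
    · rintro ⟨c, hc⟩
      exact ⟨(exists_eq_pow_of_mul_eq_pow (Nat.isUnit_iff.mpr hab) hc.symm).imp fun _ => Eq.symm,
        (exists_eq_pow_of_mul_eq_pow (Nat.isUnit_iff.mpr hab.symm)
          (mul_comm a b ▸ hc.symm)).imp fun _ => Eq.symm⟩
    · rintro ⟨⟨c, rfl⟩, ⟨d, rfl⟩⟩
      exact ⟨c * d, mul_pow c d m⟩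
  simp only [powIndicator_apply, ne_eq, mul_eq_zero, ha, hb, or_self, not_false_eq_true,
    true_and, pow_iff]
  split_ifs <;> simp_all

theorem powIndicator_two_mul_zeta_apply_prime_pow [Semiring R] {p : ℕ} (hp : p.Prime) (e : ℕ) :
    (powIndicator 2 * (ζ : ArithmeticFunction R) : ArithmeticFunction R) (p ^ e) =
      ((e / 2 + 1 : ℕ) : R) := by
  simp only [mul_apply_prime_pow _ _ hp, powIndicator_apply_prime_pow two_ne_zero hp, natCoe_apply,
    zeta_apply_ne (pow_ne_zero _ hp.ne_zero), Nat.cast_one, mul_one]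
  induction e with
  | zero => rw [zero_add, sum_range_one, if_pos (dvd_zero 2), Nat.zero_div, zero_add, Nat.cast_one]
  | succ e ih =>
    rw [sum_range_succ, ih]
    by_cases h : 2 ∣ e + 1
    · rw [if_pos h, show (e + 1) / 2 = e / 2 + 1 by omega, Nat.cast_succ (e / 2 + 1)]
    · rw [if_neg h, show (e + 1) / 2 = e / 2 by omega, add_zero]

theorem LSeriesHasSum_powIndicator {m : ℕ} {s : ℂ} (hs : 1 < (m * s).re) :
    LSeriesHasSum (powIndicator m ·) s (riemannZeta (m * s)) := by
  have hm : m ≠ 0 := by rintro rfl; norm_num at hs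
  have hzero : ∀ n ∉ Set.range (· ^ m), term (powIndicator m ·) s n = 0 := by
    rintro n hn
    rcases eq_or_ne n 0 with rfl | hn0
    · exact term_zero _ _
    · rw [term_of_ne_zero hn0, powIndicator_apply, if_neg fun h => hn h.2, zero_div]
  have hterm : term (powIndicator m ·) s ∘ (· ^ m) = term 1 (m * s) := by
    ext k
    rcases eq_or_ne k 0 with rfl | hk
    · simp [hm]
    · simp [term_of_ne_zero, hk, powIndicator_apply_pow hk, ← Complex.natCast_cpow_natCast_mul]
  rw [LSeriesHasSum, ← (Nat.pow_left_injective hm).hasSum_iff hzero, hterm]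
  exact LSeriesHasSum_one hs

end ArithmeticFunction

theorem abs_legendreSym_le_one (p : ℕ) [Fact p.Prime] (a : ℤ) : |legendreSym p a| ≤ 1 := by
  rcases eq_or_ne (a : ZMod p) 0 with h | h
  · simp [(legendreSym.eq_zero_iff p a).mpr h]
  · rcases legendreSym.eq_one_or_neg_one p h with h | h <;> simp [h]

open ArithmeticFunction

noncomputable def lam5Arith : ArithmeticFunction ℂ :=
  ⟨lam5, by simp [lam5, legendreSym.at_zero]⟩

theorem lam5Arith_apply (n : ℕ) : lam5Arith n = lam5 n :=
  rfl

theorem isMultiplicative_lam5Arith : lam5Arith.IsMultiplicative := by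
  refine ⟨by simp [lam5Arith_apply, lam5, legendreSym.at_one], fun {a b} hab => ?_⟩
  simp only [lam5Arith_apply, lam5, Nat.Coprime.card_divisors_mul hab, Nat.cast_mul,
    legendreSym.mul, Int.cast_mul]

theorem lam5Arith_apply_prime_pow {p : ℕ} (hp : p.Prime) (e : ℕ) :
    lam5Arith (p ^ e) = legendreSym 5 ((e : ℤ) + 1) := by
  rw [lam5Arith_apply, lam5, ← sigma_zero_apply, sigma_zero_apply_prime_pow hp]
  push_cast
  rfl

theorem LSeriesSummable_lam5 {s : ℂ} (hs : 1 < s.re) : LSeriesSummable lam5 s :=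
  LSeriesSummable_of_bounded_of_one_lt_re (m := 1) (fun n _ => by
    rw [lam5, Complex.norm_intCast]
    exact_mod_cast abs_legendreSym_le_one 5 _) hs

theorem sum_legendreSym_five_mul_half_succ (e : ℕ) :
    ∑ i ∈ range (e + 1), legendreSym 5 ((i : ℤ) + 1) * (((e - i) / 2 + 1 : ℕ) : ℤ) =
      if 5 ∣ e then 1 else 0 := by
  induction e using Nat.strong_induction_on with
  | _ e ih =>
  rcases lt_or_ge e 5 with he | he
  · interval_cases e <;> decide
  · obtain ⟨f, rfl⟩ := Nat.exists_eq_add_of_le' he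
    have periodic (i : ℕ) :
        legendreSym 5 ((5 + i : ℕ) + 1) = legendreSym 5 ((i : ℤ) + 1) := by
      rw [legendreSym.mod, eq_comm, legendreSym.mod]
      push_cast
      congr 1
      omega
    have tail :
        ∑ i ∈ range 5, legendreSym 5 ((i : ℤ) + 1) * (((f + 5 - i) / 2 + 1 : ℕ) : ℤ) = 0 := by
      have values : legendreSym 5 1 = 1 ∧ legendreSym 5 2 = -1 ∧ legendreSym 5 3 = -1 ∧
          legendreSym 5 4 = 1 ∧ legendreSym 5 5 = 0 := by decide
      norm_num [sum_range_succ, values]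
      omega
    rw [show f + 5 + 1 = 5 + (f + 1) by ring, sum_range_add, tail, zero_add]
    simp only [periodic, show ∀ i, f + 5 - (5 + i) = f - i from fun i => by omega]
    simp only [ih f (by omega), Nat.dvd_add_self_right]

theorem lam5Arith_mul_powIndicator_two_mul_zeta :
    lam5Arith * (powIndicator 2 * (ζ : ArithmeticFunction ℂ)) = powIndicator 5 := by
  refine (IsMultiplicative.eq_iff_eq_on_prime_powers _ (isMultiplicative_lam5Arith.mul
    ((isMultiplicative_powIndicator 2).mul isMultiplicative_zeta.natCast)) _
    (isMultiplicative_powIndicator 5)).mpr fun p e hp => ?_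
  rw [mul_apply_prime_pow _ _ hp, powIndicator_apply_prime_pow (by norm_num) hp]
  simp only [lam5Arith_apply_prime_pow hp, powIndicator_two_mul_zeta_apply_prime_pow hp]
  have key := congrArg (Int.cast (R := ℂ)) (sum_legendreSym_five_mul_half_succ e)
  simpa only [Int.cast_sum, Int.cast_mul, Int.cast_natCast, Int.cast_ite, Int.cast_one,
    Int.cast_zero] using key

theorem dirichlet_series_lam5 (s : ℂ) (hs : 1 < s.re) :
    LSeries lam5 s = riemannZeta (5 * s) / (riemannZeta s * riemannZeta (2 * s)) := by
  have hs2 : 1 < ((2 : ℕ) * s).re := by simp; linarith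
  have hs5 : 1 < ((5 : ℕ) * s).re := by simp; linarith
  have hlam : LSeriesHasSum (lam5Arith ·) s (LSeries lam5 s) :=
    (LSeriesSummable_lam5 hs).LSeriesHasSum
  have hzeta : LSeriesHasSum ((ζ : ArithmeticFunction ℂ) ·) s (riemannZeta s) :=
    LSeriesHasSum_zeta hs
  have hprod := LSeriesHasSum_mul hlam (LSeriesHasSum_mul (LSeriesHasSum_powIndicator hs2) hzeta)
  rw [lam5Arith_mul_powIndicator_two_mul_zeta] at hprod
  have euler := hprod.unique (LSeriesHasSum_powIndicator hs5)
  have hzeta2 := riemannZeta_ne_zero_of_one_lt_re hs2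
  push_cast at euler hzeta2
  rw [eq_div_iff (mul_ne_zero (riemannZeta_ne_zero_of_one_lt_re hs) hzeta2)]
  linear_combination euler
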